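/- Let A ∈ F_q^{m×n} and ε ≥ 1, and suppose there exists a nonzero vector u ∈ F_q^m with u ∉ I_FU(A,ε) = {A·y : 0 < wt(y) ≤ 2ε} \ {0}. Let S ∈ F_q^{(m−1)×m} be a matrix whose rows form a basis of the orthogonal complement (with respect to the standard bilinear form) of the span of u. Then S·z ≠ 0 for every z ∈ I_FU(A,ε). -/

import Mathlib

/-! A syndrome `z` with `S z = 0` lies in `(u^⊥)^⊥ = span {u}`, so `z = c • u` with `c ≠ 0`.
Scaling the error vector of `z` by `c⁻¹` keeps its weight and exhibits `u` as a syndrome,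
i.e. `u ∈ I_FU(A, ε)`. -/

/-- The set `I_FU(A, ε)` of all nonzero vectors of the form `A·y` with
`0 < wt(y) ≤ 2ε`. -/
def IFU {F : Type*} [Field F] [DecidableEq F] {m n : ℕ}
    (A : Matrix (Fin m) (Fin n) F) (ε : ℕ) : Set (Fin m → F) :=
  {z | z ≠ 0 ∧ ∃ y : Fin n → F,
      0 < hammingNorm y ∧ hammingNorm y ≤ 2 * ε ∧ A.mulVec y = z}

open Matrix

theorem smul_mem_IFU {F : Type*} [Field F] [DecidableEq F] {m n : ℕ}
    {A : Matrix (Fin m) (Fin n) F} {ε : ℕ} {z : Fin m → F} (hz : z ∈ IFU A ε)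
    {c : F} (hc : c ≠ 0) : c • z ∈ IFU A ε := by
  obtain ⟨hz0, y, hy_pos, hy_le, rfl⟩ := hz
  have hweight : hammingNorm (c • y) = hammingNorm y :=
    hammingNorm_smul (fun _ => smul_right_injective F hc) y
  exact ⟨smul_ne_zero hc hz0, c • y, hweight ▸ hy_pos, hweight ▸ hy_le, mulVec_smul A c y⟩

theorem dotProduct_eq_zero_of_mem_span_rows {R ι κ : Type*} [CommSemiring R] [Fintype κ]
    [DecidableEq κ] {S : Matrix ι κ R} {z : κ → R} (hz : S *ᵥ z = 0) {v : κ → R}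
    (hv : v ∈ Submodule.span R (Set.range S)) : v ⬝ᵥ z = 0 := by
  have hrows : Set.range S ⊆ LinearMap.ker (dotProductEquiv R κ z) := by
    rintro _ ⟨i, rfl⟩
    simpa [mulVec, dotProduct_comm] using congrFun hz i
  simpa [dotProduct_comm] using Submodule.span_le.2 hrows hv

theorem mem_span_singleton_of_forall_dotProduct_eq_zero {K ι : Type*} [Field K] [Fintype ι]
    [DecidableEq ι] {u z : ι → K} (h : ∀ v, v ⬝ᵥ u = 0 → v ⬝ᵥ z = 0) :
    z ∈ Submodule.span K {u} := by
  let D := dotProductEquiv K ι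
  have hD : D z ∈ Submodule.span K (Set.range fun _ : Unit => D u) :=
    mem_span_of_iInf_ker_le_ker fun v hv => by
      have hvu : u ⬝ᵥ v = 0 := (Submodule.mem_iInf _).1 hv ()
      simpa [D, dotProduct_comm] using h v (by rwa [dotProduct_comm])
  rw [Set.range_const, Submodule.mem_span_singleton] at hD
  obtain ⟨c, hc⟩ := hD
  exact Submodule.mem_span_singleton.2 ⟨c, D.injective (by rw [map_smul, hc])⟩

theorem parity_check_of_complement_is_valid_general {F : Type*} [Field F] [DecidableEq F]
    {m n : ℕ} (A : Matrix (Fin m) (Fin n) F) (ε : ℕ)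
    (u : Fin m → F) (hu : u ∉ IFU A ε)
    (S : Matrix (Fin (m - 1)) (Fin m) F)
    (hSspan : Submodule.span F (Set.range (fun i : Fin (m - 1) => S i)) =
      {v : Fin m → F | ∀ c ∈ Submodule.span F {u}, dotProduct v c = 0}) :
    ∀ z ∈ IFU A ε, S.mulVec z ≠ 0 := by
  intro z hz hSz
  have horth : ∀ v, v ⬝ᵥ u = 0 → v ⬝ᵥ z = 0 := by
    intro v hv
    refine dotProduct_eq_zero_of_mem_span_rows hSz ?_
    rw [← SetLike.mem_coe, hSspan]
    intro c hc
    obtain ⟨a, rfl⟩ := Submodule.mem_span_singleton.1 hc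
    rw [dotProduct_smul, hv, smul_zero]
  obtain ⟨c, rfl⟩ :=
    Submodule.mem_span_singleton.1 (mem_span_singleton_of_forall_dotProduct_eq_zero horth)
  have hc : c ≠ 0 := left_ne_zero_of_smul hz.1
  apply hu
  simpa [smul_smul, hc] using smul_mem_IFU hz (inv_ne_zero hc)

theorem parity_check_of_complement_is_valid {F : Type*} [Field F] [DecidableEq F]
    {m n : ℕ} (A : Matrix (Fin m) (Fin n) F) (ε : ℕ) (hε : 1 ≤ ε)
    (u : Fin m → F) (hu0 : u ≠ 0) (hu : u ∉ IFU A ε)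
    (S : Matrix (Fin (m - 1)) (Fin m) F)
    (hSindep : LinearIndependent F (fun i : Fin (m - 1) => S i))
    (hSspan : Submodule.span F (Set.range (fun i : Fin (m - 1) => S i)) =
      {v : Fin m → F | ∀ c ∈ Submodule.span F {u}, dotProduct v c = 0}) :
    ∀ z ∈ IFU A ε, S.mulVec z ≠ 0 :=
  parity_check_of_complement_is_valid_general A ε u hu S hSspan
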